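/- arXiv:1805.08855 — 2 statements merged into one kernel-verified Lean document; each statement's English description precedes it below -/
import Mathlib

section
/- With ρ_d defined as ρ_d = Σ_{i=0}^{d−1} (sin θ̌_i / π) · ∏_{j=i+1}^{d−1} (π − θ̌_j)/π (θ̌_0 = π, θ̌_i = g(θ̌_{i−1})), there exist universal constants such that for all d ≥ 2: 1/(K₁(d+2)²) ≤ 1 − ρ_d ≤ 250/(d+1). -/
noncomputable def g (θ : ℝ) : ℝ :=
  Real.arccos (((Real.pi - θ) * Real.cos θ + Real.sin θ) / Real.pi)

noncomputable def rho (t : ℕ → ℝ) (d : ℕ) : ℝ :=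
  ∑ i ∈ Finset.range d,
    (Real.sin (t i) / Real.pi) * ∏ j ∈ Finset.Ico (i + 1) d, (Real.pi - t j) / Real.pi

/-!
Write `e d = 1 - ρ_d`. Splitting off the last term of `ρ_{d+1}` gives the recursion
`e (d + 1) = e d * (1 - θ̌_d / π) + (θ̌_d - sin θ̌_d) / π` with `e 1 = 1`.
Taylor bounds for `sin` and `cos` show that on `[0, π/2]` the map `g` satisfies
`π θ / (π + θ) ≤ g θ ≤ 4 π θ / (4 π + θ)`, i.e. `1 / g θ - 1 / θ` lies between `1 / (4 π)` and
`1 / π`, whence `π / (i + 1) ≤ θ̌_i ≤ 4 π / (i + 7)` for `i ≥ 1`. Feeding these bounds and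
`θ³ / 12 ≤ θ - sin θ ≤ θ³ / 6` into the recursion, both bounds on `e d` follow by induction on `d`.
-/

open Real

lemma nonneg_of_hasDerivAt_nonneg {f f' : ℝ → ℝ} (hf : ∀ x, HasDerivAt f (f' x) x)
    (hf0 : f 0 = 0) (hf' : ∀ x, 0 ≤ x → 0 ≤ f' x) {x : ℝ} (hx : 0 ≤ x) : 0 ≤ f x := by
  have hmono : MonotoneOn f (Set.Ici 0) :=
    monotoneOn_of_hasDerivWithinAt_nonneg (convex_Ici 0)
      (fun y _ => (hf y).continuousAt.continuousWithinAt) (fun y _ => (hf y).hasDerivWithinAt)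
      (fun y hy => hf' y (interior_subset hy))
  simpa [hf0] using hmono Set.self_mem_Ici hx hx

lemma cos_le_taylor_four {x : ℝ} (hx : 0 ≤ x) : cos x ≤ 1 - x ^ 2 / 2 + x ^ 4 / 24 := by
  have := nonneg_of_hasDerivAt_nonneg (f := fun t => 1 - t ^ 2 / 2 + t ^ 4 / 24 - cos t)
    (fun t => ((((hasDerivAt_const t (1 : ℝ)).sub ((hasDerivAt_pow 2 t).div_const 2)).add
      ((hasDerivAt_pow 4 t).div_const 24)).sub (hasDerivAt_cos t)))
    (by norm_num) (fun t ht => by push_cast; nlinarith [sin_ge_sub_cube ht]) hx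
  linarith

lemma sin_le_taylor_five {x : ℝ} (hx : 0 ≤ x) : sin x ≤ x - x ^ 3 / 6 + x ^ 5 / 120 := by
  have := nonneg_of_hasDerivAt_nonneg (f := fun t => t - t ^ 3 / 6 + t ^ 5 / 120 - sin t)
    (fun t => ((((hasDerivAt_id' t).sub ((hasDerivAt_pow 3 t).div_const 6)).add
      ((hasDerivAt_pow 5 t).div_const 120)).sub (hasDerivAt_sin t)))
    (by norm_num) (fun t ht => by push_cast; nlinarith [cos_le_taylor_four ht]) hx
  linarith

lemma taylor_six_le_cos {x : ℝ} (hx : 0 ≤ x) :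
    1 - x ^ 2 / 2 + x ^ 4 / 24 - x ^ 6 / 720 ≤ cos x := by
  have := nonneg_of_hasDerivAt_nonneg
    (f := fun t => cos t - (1 - t ^ 2 / 2 + t ^ 4 / 24 - t ^ 6 / 720))
    (fun t => ((hasDerivAt_cos t).sub ((((hasDerivAt_const t (1 : ℝ)).sub
      ((hasDerivAt_pow 2 t).div_const 2)).add ((hasDerivAt_pow 4 t).div_const 24)).sub
      ((hasDerivAt_pow 6 t).div_const 720))))
    (by norm_num) (fun t ht => by push_cast; nlinarith [sin_le_taylor_five ht]) hx
  linarith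

lemma cube_div_twelve_le_sub_sin {x : ℝ} (h0 : 0 ≤ x) (h1 : x ^ 2 ≤ 10) :
    x ^ 3 / 12 ≤ x - sin x := by
  nlinarith [sin_le_taylor_five h0, mul_nonneg (pow_nonneg h0 3) (sub_nonneg.2 h1)]

/- In the next two lemmas `θ = π y`; after dividing by `π`, the inequality is polynomial in `y`
and `q = π ^ 2`, and it holds for all `q ∈ [0, 10]`. -/

lemma taylor_div_add_le_g {θ : ℝ} (h0 : 0 ≤ θ) (h1 : θ ≤ π / 2) :
    (π - θ) * (1 - θ ^ 2 / 2 + θ ^ 4 / 24) + (θ - θ ^ 3 / 6 + θ ^ 5 / 120)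
      ≤ (1 - (π * θ / (π + θ)) ^ 2 / 2) * π := by
  obtain ⟨y, rfl⟩ : ∃ y, θ = π * y := ⟨θ / π, by field_simp⟩
  have hy : 0 ≤ y := nonneg_of_mul_nonneg_right h0 pi_pos
  have hy' : 0 ≤ 1 / 2 - y := by nlinarith [pi_pos]
  have hq : π ^ 2 ≤ 10 := by nlinarith [pi_lt_d2, pi_pos]
  have key : y ^ 2 / 2 + π ^ 2 * ((1 + y) ^ 2 * y ^ 4 * ((1 - y) / 24 + y / 120))
      ≤ (1 + y) ^ 2 * ((1 - y) * y ^ 2 / 2 + y ^ 3 / 6) := by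
    have at_ten : y ^ 2 / 2 + 10 * ((1 + y) ^ 2 * y ^ 4 * ((1 - y) / 24 + y / 120))
        ≤ (1 + y) ^ 2 * ((1 - y) * y ^ 2 / 2 + y ^ 3 / 6) := by
      nlinarith [mul_nonneg hy hy', mul_nonneg (pow_nonneg hy 2) hy',
        mul_nonneg (pow_nonneg hy 3) hy', mul_nonneg (pow_nonneg hy 4) hy',
        pow_nonneg hy 3, pow_nonneg hy 4]
    have : 0 ≤ (1 + y) ^ 2 * y ^ 4 * ((1 - y) / 24 + y / 120) := by
      have : 0 ≤ 1 - y := by linarith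
      positivity
    linarith [mul_le_mul_of_nonneg_right hq this]
  have e : π * (π * y) / (π + π * y) = π * (y / (1 + y)) := by field_simp
  rw [e, ← sub_nonneg]
  field_simp
  nlinarith [mul_le_mul_of_nonneg_left key (pow_pos pi_pos 3).le]

lemma taylor_g_le_div_add {θ : ℝ} (h0 : 0 ≤ θ) (h1 : θ ≤ π / 2) :
    (1 - (4 * π * θ / (4 * π + θ)) ^ 2 / 2 + (4 * π * θ / (4 * π + θ)) ^ 4 / 24) * π
      ≤ (π - θ) * (1 - θ ^ 2 / 2 + θ ^ 4 / 24 - θ ^ 6 / 720) + (θ - θ ^ 3 / 6) := by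
  obtain ⟨y, rfl⟩ : ∃ y, θ = π * y := ⟨θ / π, by field_simp⟩
  have hy : 0 ≤ y := nonneg_of_mul_nonneg_right h0 pi_pos
  have hy' : 0 ≤ 1 / 2 - y := by nlinarith [pi_pos]
  have hq : π ^ 2 ≤ 10 := by nlinarith [pi_lt_d2, pi_pos]
  -- concave in `q = π ^ 2`, so it suffices to check `q = 0` and `q = 10`
  have key : ((1 - y) * y ^ 2 / 2 + y ^ 3 / 6 + (π ^ 2) ^ 2 * (1 - y) * y ^ 6 / 720) * (4 + y) ^ 4
      ≤ 8 * y ^ 2 * (4 + y) ^ 2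
        + π ^ 2 * ((1 - y) * y ^ 4 * (4 + y) ^ 4 / 24 - 256 * y ^ 4 / 24) := by
    have at_zero : ((1 - y) * y ^ 2 / 2 + y ^ 3 / 6) * (4 + y) ^ 4 ≤ 8 * y ^ 2 * (4 + y) ^ 2 := by
      nlinarith [mul_nonneg hy hy', mul_nonneg (pow_nonneg hy 2) hy',
        mul_nonneg (pow_nonneg hy 3) hy', mul_nonneg (pow_nonneg hy 4) hy',
        pow_nonneg hy 3, pow_nonneg hy 4]
    have at_ten : ((1 - y) * y ^ 2 / 2 + y ^ 3 / 6 + 100 * (1 - y) * y ^ 6 / 720) * (4 + y) ^ 4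
        ≤ 8 * y ^ 2 * (4 + y) ^ 2
          + 10 * ((1 - y) * y ^ 4 * (4 + y) ^ 4 / 24 - 256 * y ^ 4 / 24) := by
      nlinarith [mul_nonneg hy hy', mul_nonneg (pow_nonneg hy 2) hy',
        mul_nonneg (pow_nonneg hy 3) hy', mul_nonneg (pow_nonneg hy 4) hy',
        pow_nonneg hy 3, pow_nonneg hy 4]
    have hC : 0 ≤ (1 - y) * y ^ 6 * (4 + y) ^ 4 :=
      mul_nonneg (mul_nonneg (by linarith) (by positivity)) (by positivity)
    have hq0 : 0 ≤ π ^ 2 := by positivity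
    nlinarith [mul_nonneg (mul_nonneg hq0 (sub_nonneg.2 hq)) hC,
      mul_nonneg hq0 (sub_nonneg.2 at_ten), mul_nonneg (sub_nonneg.2 hq) (sub_nonneg.2 at_zero)]
  have e : 4 * π * (π * y) / (4 * π + π * y) = π * (4 * y / (4 + y)) := by field_simp
  rw [e, ← sub_nonneg]
  field_simp
  nlinarith [mul_le_mul_of_nonneg_left key (pow_pos pi_pos 3).le]

lemma div_add_le_g {θ : ℝ} (h0 : 0 ≤ θ) (h1 : θ ≤ π / 2) : π * θ / (π + θ) ≤ g θ := by
  have hu0 : 0 ≤ π * θ / (π + θ) := by positivity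
  have huπ : π * θ / (π + θ) ≤ π := div_le_of_le_mul₀ (by positivity) pi_pos.le (by nlinarith)
  rw [← arccos_cos hu0 huπ]
  refine arccos_le_arccos ((div_le_iff₀ pi_pos).2 ?_)
  calc (π - θ) * cos θ + sin θ
      ≤ (π - θ) * (1 - θ ^ 2 / 2 + θ ^ 4 / 24) + (θ - θ ^ 3 / 6 + θ ^ 5 / 120) := by
        gcongr
        · linarith [pi_pos]
        · exact cos_le_taylor_four h0
        · exact sin_le_taylor_five h0
    _ ≤ (1 - (π * θ / (π + θ)) ^ 2 / 2) * π := taylor_div_add_le_g h0 h1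
    _ ≤ cos (π * θ / (π + θ)) * π := by gcongr; exact one_sub_sq_div_two_le_cos

lemma g_le_div_add {θ : ℝ} (h0 : 0 ≤ θ) (h1 : θ ≤ π / 2) : g θ ≤ 4 * π * θ / (4 * π + θ) := by
  have hv0 : 0 ≤ 4 * π * θ / (4 * π + θ) := by positivity
  have hvπ : 4 * π * θ / (4 * π + θ) ≤ π :=
    div_le_of_le_mul₀ (by positivity) pi_pos.le (by nlinarith)
  rw [← arccos_cos hv0 hvπ]
  refine arccos_le_arccos ((le_div_iff₀ pi_pos).2 ?_)
  calc cos (4 * π * θ / (4 * π + θ)) * π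
      ≤ (1 - (4 * π * θ / (4 * π + θ)) ^ 2 / 2 + (4 * π * θ / (4 * π + θ)) ^ 4 / 24) * π := by
        gcongr; exact cos_le_taylor_four hv0
    _ ≤ (π - θ) * (1 - θ ^ 2 / 2 + θ ^ 4 / 24 - θ ^ 6 / 720) + (θ - θ ^ 3 / 6) :=
        taylor_g_le_div_add h0 h1
    _ ≤ (π - θ) * cos θ + sin θ := by
        gcongr
        · linarith [pi_pos]
        · exact taylor_six_le_cos h0
        · exact sin_ge_sub_cube h0

lemma g_pi : g π = π / 2 := by
  simp [g, arccos_zero]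

/- The offset `7` makes the upper bound hold at `i = 1`, where `t 1 = π / 2`, and keeps every
`t i` in `[0, π / 2]`, where the bounds on `g` are available. -/
lemma angle_bounds {t : ℕ → ℝ} (h0 : t 0 = π) (hrec : ∀ i, t (i + 1) = g (t i)) {i : ℕ}
    (hi : 1 ≤ i) : π / (i + 1) ≤ t i ∧ t i ≤ 4 * π / (i + 7) := by
  induction i, hi using Nat.le_induction with
  | base =>
    rw [hrec, h0, g_pi]
    norm_num
    linarith
  | succ n hn ih =>
    obtain ⟨hlo, hhi⟩ := ih
    have hn' : (1 : ℝ) ≤ n := by exact_mod_cast hn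
    have hlo' : π ≤ t n * (n + 1) := (div_le_iff₀ (by positivity)).1 hlo
    have hhi' : t n * (n + 7) ≤ 4 * π := (le_div_iff₀ (by positivity)).1 hhi
    have ht0 : 0 ≤ t n := (div_nonneg pi_pos.le (by positivity)).trans hlo
    have ht1 : t n ≤ π / 2 := by nlinarith [pi_pos]
    rw [hrec]
    push_cast
    constructor
    · refine le_trans ?_ (div_add_le_g ht0 ht1)
      rw [div_le_div_iff₀ (by positivity) (by positivity)]
      nlinarith [pi_pos]
    · refine (g_le_div_add ht0 ht1).trans ?_
      rw [div_le_div_iff₀ (by positivity) (by positivity)]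
      nlinarith [pi_pos]

lemma one_sub_rho_one {t : ℕ → ℝ} (h0 : t 0 = π) : 1 - rho t 1 = 1 := by
  simp [rho, h0]

lemma one_sub_rho_succ (t : ℕ → ℝ) (n : ℕ) :
    1 - rho t (n + 1) = (1 - rho t n) * (1 - t n / π) + (t n - sin (t n)) / π := by
  have hrho : rho t (n + 1) = rho t n * ((π - t n) / π) + sin (t n) / π := by
    simp only [rho]
    rw [Finset.sum_range_succ, Finset.Ico_self, Finset.prod_empty, mul_one, Finset.sum_mul]
    congr 1
    refine Finset.sum_congr rfl fun i hi => ?_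
    rw [Finset.prod_Ico_succ_top (Finset.mem_range.1 hi), mul_assoc]
  rw [hrho]
  field_simp
  ring

lemma one_sub_div_pi_bounds {θ n : ℝ} (hn : 0 ≤ n) (hlo : π / (n + 1) ≤ θ)
    (hhi : θ ≤ 4 * π / (n + 7)) : (n + 3) / (n + 7) ≤ 1 - θ / π ∧ 1 - θ / π ≤ n / (n + 1) := by
  have hlo' : π ≤ θ * (n + 1) := (div_le_iff₀ (by positivity)).1 hlo
  have hhi' : θ * (n + 7) ≤ 4 * π := (le_div_iff₀ (by positivity)).1 hhi
  constructor
  · rw [le_sub_iff_add_le, div_add_div _ _ (by positivity) pi_pos.ne',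
      div_le_one (by positivity)]
    nlinarith [pi_pos]
  · rw [sub_le_iff_le_add, div_add_div _ _ (by positivity) pi_pos.ne',
      le_div_iff₀ (by positivity)]
    nlinarith [pi_pos]

lemma sub_sin_div_pi_bounds {θ n : ℝ} (hn : 0 ≤ n) (hlo : π / (n + 1) ≤ θ)
    (hhi : θ ≤ 4 * π / (n + 7)) :
    1 / (2 * (n + 1) ^ 3) ≤ (θ - sin θ) / π ∧ (θ - sin θ) / π ≤ 250 / (n + 7) ^ 3 := by
  have hlo' : π ≤ θ * (n + 1) := (div_le_iff₀ (by positivity)).1 hlo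
  have hhi' : θ * (n + 7) ≤ 4 * π := (le_div_iff₀ (by positivity)).1 hhi
  have hθ : 0 ≤ θ := (div_nonneg pi_pos.le (by positivity)).trans hlo
  have hsq : θ ^ 2 ≤ 10 := by nlinarith [pi_le_four]
  constructor
  · rw [div_le_div_iff₀ (by positivity) pi_pos]
    calc 1 * π ≤ π ^ 3 / 6 := by
          have : 9 ≤ π ^ 2 := by nlinarith [pi_gt_three]
          nlinarith [mul_le_mul_of_nonneg_left this pi_pos.le]
      _ ≤ (θ * (n + 1)) ^ 3 / 6 := by gcongr
      _ = θ ^ 3 / 12 * (2 * (n + 1) ^ 3) := by ring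
      _ ≤ (θ - sin θ) * (2 * (n + 1) ^ 3) := by
          gcongr; exact cube_div_twelve_le_sub_sin hθ hsq
  · rw [div_le_div_iff₀ pi_pos (by positivity)]
    calc (θ - sin θ) * (n + 7) ^ 3 ≤ θ ^ 3 / 6 * (n + 7) ^ 3 := by
          gcongr; linarith [sin_ge_sub_cube hθ]
      _ = (θ * (n + 7)) ^ 3 / 6 := by ring
      _ ≤ (4 * π) ^ 3 / 6 := by gcongr
      _ ≤ 250 * π := by
          have : π ^ 2 ≤ 16 := by nlinarith [pi_le_four, pi_pos]
          nlinarith [mul_le_mul_of_nonneg_left this pi_pos.le]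

lemma one_sub_rho_le {t : ℕ → ℝ} (h0 : t 0 = π)
    (hbd : ∀ i : ℕ, 1 ≤ i → π / (i + 1) ≤ t i ∧ t i ≤ 4 * π / (i + 7)) {d : ℕ} (hd : 1 ≤ d) :
    1 - rho t d ≤ 250 / (d + 1) := by
  induction d, hd using Nat.le_induction with
  | base => rw [one_sub_rho_one h0]; norm_num
  | succ n hn ih =>
    obtain ⟨hlo, hhi⟩ := hbd n hn
    obtain ⟨hc_lo, hc_hi⟩ := one_sub_div_pi_bounds n.cast_nonneg hlo hhi
    have hc0 : 0 ≤ 1 - t n / π := (by positivity : (0 : ℝ) ≤ (n + 3) / (n + 7)).trans hc_lo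
    have hn' : (0 : ℝ) < n := by exact_mod_cast hn
    rw [one_sub_rho_succ]
    push_cast
    calc (1 - rho t n) * (1 - t n / π) + (t n - sin (t n)) / π
        ≤ 250 / ((n : ℝ) + 1) * (n / (n + 1)) + 250 / (n + 7) ^ 3 :=
          add_le_add (mul_le_mul ih hc_hi hc0 (by positivity))
            (sub_sin_div_pi_bounds n.cast_nonneg hlo hhi).2
      _ ≤ 250 / (n + 1 + 1) := by
        rw [div_mul_div_comm, div_add_div _ _ (by positivity) (by positivity),
          div_le_div_iff₀ (by positivity) (by positivity)]
        nlinarith [pow_pos hn' 3, pow_pos hn' 4, pow_pos hn' 5]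

lemma inv_le_one_sub_rho {t : ℕ → ℝ} (h0 : t 0 = π)
    (hbd : ∀ i : ℕ, 1 ≤ i → π / (i + 1) ≤ t i ∧ t i ≤ 4 * π / (i + 7)) {d : ℕ} (hd : 1 ≤ d) :
    1 / (10 * (d + 2) ^ 2) ≤ 1 - rho t d := by
  induction d, hd using Nat.le_induction with
  | base => rw [one_sub_rho_one h0]; norm_num
  | succ n hn ih =>
    obtain ⟨hlo, hhi⟩ := hbd n hn
    have hc := (one_sub_div_pi_bounds n.cast_nonneg hlo hhi).1
    have hs := (sub_sin_div_pi_bounds n.cast_nonneg hlo hhi).1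
    have hn' : (0 : ℝ) < n := by exact_mod_cast hn
    rw [one_sub_rho_succ]
    push_cast
    calc 1 / (10 * ((n : ℝ) + 1 + 2) ^ 2)
        ≤ 1 / (10 * ((n : ℝ) + 2) ^ 2) * ((n + 3) / (n + 7)) + 1 / (2 * (n + 1) ^ 3) := by
          rw [div_mul_div_comm, div_add_div _ _ (by positivity) (by positivity),
            div_le_div_iff₀ (by positivity) (by positivity)]
          nlinarith [pow_pos hn' 3, pow_pos hn' 4, pow_pos hn' 5, pow_pos hn' 6, pow_pos hn' 7]
      _ ≤ (1 - rho t n) * (1 - t n / π) + (t n - sin (t n)) / π :=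
          add_le_add (mul_le_mul ih hc (by positivity) ((by positivity : (0 : ℝ) ≤ _).trans ih)) hs

theorem stmt11 (t : ℕ → ℝ) (h0 : t 0 = Real.pi) (hrec : ∀ i, t (i + 1) = g (t i)) :
    ∃ K₁ : ℝ, 0 < K₁ ∧ ∀ d : ℕ, 2 ≤ d →
      1 / (K₁ * ((d : ℝ) + 2) ^ 2) ≤ 1 - rho t d ∧ 1 - rho t d ≤ 250 / ((d : ℝ) + 1) := by
  have hbd : ∀ i : ℕ, 1 ≤ i → π / (i + 1) ≤ t i ∧ t i ≤ 4 * π / (i + 7) :=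
    fun _ => angle_bounds h0 hrec
  exact ⟨10, by norm_num, fun d hd =>
    ⟨inv_le_one_sub_rho h0 hbd (by omega), one_sub_rho_le h0 hbd (by omega)⟩⟩
end

section
/- Suppose W ∈ ℝ^{n×k} satisfies the WDC with constant ε. Then for any nonzero x, y with θ = ∠(x,y), ‖(W_{+,x} − W_{+,y}) y‖² ≤ 2(2ε + θ)‖x − y‖². -/
/-!
Put `z = x - y`. Row by row, `(1[w⬝x>0] - 1[w⬝y>0])² (w⬝y)²` is at most
`(1[w⬝x>0] + 1[w⬝y>0] - 2·1[w⬝x>0]·1[w⬝y>0]) (w⬝z)²`, so the left side is bounded by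
`zᵀ(W₊ₓᵀW₊ₓ + W₊ᵧᵀW₊ᵧ - 2W₊ₓᵀW₊ᵧ)z`. The WDC replaces each of these three quadratic forms by that
of `Q` up to `ε‖z‖²`, and `Q_{x,x} + Q_{y,y} - 2Q_{x,y} = (θ/π)I - (sin θ/π)M`. Since `z` lies in
`span{x, y}`, on which `M` swaps `x̂` and `ŷ`, a direct computation with Cauchy–Schwarz gives
`-zᵀMz ≤ ‖z‖²`; hence the bound `(4ε + (θ + sin θ)/π)‖z‖² ≤ 2(2ε + θ)‖z‖²`.
-/

open Matrix

noncomputable section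

/-- Euclidean norm on `Fin k → ℝ`. -/
def vnorm {k : ℕ} (x : Fin k → ℝ) : ℝ := Real.sqrt (∑ i, x i ^ 2)

/-- Angle between two vectors of `Fin k → ℝ` (with Euclidean inner product). -/
def ang {k : ℕ} (x y : Fin k → ℝ) : ℝ := Real.arccos ((x ⬝ᵥ y) / (vnorm x * vnorm y))

/-- ℓ²→ℓ² operator (spectral) norm of a matrix. -/
def opNorm {m k : ℕ} (M : Matrix (Fin m) (Fin k) ℝ) : ℝ :=
  ‖LinearMap.toContinuousLinearMap (Matrix.toEuclideanLin M)‖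

/-- `W_{+,x} = diag(Wx > 0) W`: keeps only rows of `W` with positive dot product with `x`. -/
def Wplus {m k : ℕ} (W : Matrix (Fin m) (Fin k) ℝ) (x : Fin k → ℝ) :
    Matrix (Fin m) (Fin k) ℝ :=
  Matrix.of fun i j => if 0 < W i ⬝ᵥ x then W i j else 0

/-- The Weight Distribution Condition with constant ε. The matrix `M` is the (unique) symmetric
matrix sending `x̂ ↦ ŷ`, `ŷ ↦ x̂` and vanishing on `span{x,y}ᗮ`. -/
def WDC {m k : ℕ} (W : Matrix (Fin m) (Fin k) ℝ) (ε : ℝ) : Prop :=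
  ∀ x y : Fin k → ℝ, x ≠ 0 → y ≠ 0 →
    ∃ M : Matrix (Fin k) (Fin k) ℝ, M.IsSymm ∧
      M.mulVec ((vnorm x)⁻¹ • x) = (vnorm y)⁻¹ • y ∧
      M.mulVec ((vnorm y)⁻¹ • y) = (vnorm x)⁻¹ • x ∧
      (∀ z : Fin k → ℝ, x ⬝ᵥ z = 0 → y ⬝ᵥ z = 0 → M.mulVec z = 0) ∧
      opNorm ((∑ i : Fin m,
          if 0 < W i ⬝ᵥ x ∧ 0 < W i ⬝ᵥ y then vecMulVec (W i) (W i) else 0) -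
        (((Real.pi - ang x y) / (2 * Real.pi)) • (1 : Matrix (Fin k) (Fin k) ℝ) +
          (Real.sin (ang x y) / (2 * Real.pi)) • M)) ≤ ε

section Euclidean

variable {k : ℕ}

lemma vnorm_eq_norm_toLp (x : Fin k → ℝ) : vnorm x = ‖WithLp.toLp 2 x‖ := by
  simp [vnorm, EuclideanSpace.norm_eq]

lemma dotProduct_eq_inner_toLp (x y : Fin k → ℝ) :
    x ⬝ᵥ y = inner ℝ (WithLp.toLp 2 x) (WithLp.toLp 2 y) := by
  rw [EuclideanSpace.inner_toLp_toLp, star_trivial, dotProduct_comm]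

lemma vnorm_sq (x : Fin k → ℝ) : vnorm x ^ 2 = x ⬝ᵥ x := by
  rw [vnorm_eq_norm_toLp, dotProduct_eq_inner_toLp, real_inner_self_eq_norm_sq]

lemma vnorm_pos {x : Fin k → ℝ} (hx : x ≠ 0) : 0 < vnorm x := by
  simpa [vnorm_eq_norm_toLp] using hx

lemma abs_dotProduct_le_vnorm_mul_vnorm (x y : Fin k → ℝ) :
    |x ⬝ᵥ y| ≤ vnorm x * vnorm y := by
  rw [dotProduct_eq_inner_toLp, vnorm_eq_norm_toLp, vnorm_eq_norm_toLp]
  exact abs_real_inner_le_norm _ _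

lemma vnorm_mulVec_le_opNorm_mul {m : ℕ} (A : Matrix (Fin m) (Fin k) ℝ) (z : Fin k → ℝ) :
    vnorm (A *ᵥ z) ≤ opNorm A * vnorm z := by
  rw [vnorm_eq_norm_toLp, vnorm_eq_norm_toLp]
  exact (LinearMap.toContinuousLinearMap (toEuclideanLin A)).le_opNorm (WithLp.toLp 2 z)

lemma abs_dotProduct_mulVec_le_opNorm_mul (A : Matrix (Fin k) (Fin k) ℝ) (z : Fin k → ℝ) :
    |z ⬝ᵥ A *ᵥ z| ≤ opNorm A * vnorm z ^ 2 :=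
  calc |z ⬝ᵥ A *ᵥ z| ≤ vnorm z * vnorm (A *ᵥ z) := abs_dotProduct_le_vnorm_mul_vnorm _ _
    _ ≤ vnorm z * (opNorm A * vnorm z) := by
      gcongr
      · exact Real.sqrt_nonneg _
      · exact vnorm_mulVec_le_opNorm_mul A z
    _ = opNorm A * vnorm z ^ 2 := by ring

lemma ang_self {x : Fin k → ℝ} (hx : x ≠ 0) : ang x x = 0 := by
  rw [ang, ← sq, vnorm_sq, div_self, Real.arccos_one]
  rw [← vnorm_sq]; exact pow_ne_zero 2 (vnorm_pos hx).ne'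

end Euclidean

lemma dotProduct_sum_ite_vecMulVec_mulVec {ι n R : Type*} [Fintype ι] [Fintype n] [CommRing R]
    (p : ι → Prop) [DecidablePred p] (W : Matrix ι n R) (z : n → R) :
    z ⬝ᵥ (∑ i, if p i then vecMulVec (W i) (W i) else 0) *ᵥ z =
      ∑ i, if p i then (W i ⬝ᵥ z) ^ 2 else 0 := by
  rw [sum_mulVec, dotProduct_sum]
  refine Finset.sum_congr rfl fun i _ => ?_
  split_ifs
  · simp [vecMulVec_mulVec, dotProduct_comm z, sq]
  · simp

lemma Wplus_mulVec_apply {m k : ℕ} (W : Matrix (Fin m) (Fin k) ℝ) (x v : Fin k → ℝ) (i : Fin m) :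
    (Wplus W x *ᵥ v) i = if 0 < W i ⬝ᵥ x then W i ⬝ᵥ v else 0 := by
  split_ifs with h <;> simp [Wplus, mulVec, h]

lemma sq_ite_sub_ite_le (a b : ℝ) :
    ((if 0 < a then b else 0) - (if 0 < b then b else 0)) ^ 2 ≤
      (if 0 < a then (a - b) ^ 2 else 0) + (if 0 < b then (a - b) ^ 2 else 0) -
        2 * (if 0 < a ∧ 0 < b then (a - b) ^ 2 else 0) := by
  split_ifs <;> nlinarith

/-- `gramForm W x y z` is the quadratic form `zᵀ W₊ₓᵀ W₊ᵧ z`. -/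
def gramForm {m k : ℕ} (W : Matrix (Fin m) (Fin k) ℝ) (x y z : Fin k → ℝ) : ℝ :=
  ∑ i, if 0 < W i ⬝ᵥ x ∧ 0 < W i ⬝ᵥ y then (W i ⬝ᵥ z) ^ 2 else 0

lemma sq_vnorm_Wplus_sub_Wplus_mulVec_le {m k : ℕ} (W : Matrix (Fin m) (Fin k) ℝ)
    (x y : Fin k → ℝ) :
    vnorm ((Wplus W x - Wplus W y) *ᵥ y) ^ 2 ≤
      gramForm W x x (x - y) + gramForm W y y (x - y) - 2 * gramForm W x y (x - y) := by
  simp only [vnorm_sq, gramForm, and_self, dotProduct_sub, Finset.mul_sum,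
    ← Finset.sum_add_distrib, ← Finset.sum_sub_distrib]
  refine Finset.sum_le_sum fun i _ => ?_
  simpa only [sub_mulVec, Pi.sub_apply, Wplus_mulVec_apply, sq] using
    sq_ite_sub_ite_le (W i ⬝ᵥ x) (W i ⬝ᵥ y)

namespace WDC

variable {m k : ℕ} {W : Matrix (Fin m) (Fin k) ℝ} {ε : ℝ}

lemma exists_abs_gramForm_sub_le (hW : WDC W ε) {x y : Fin k → ℝ} (hx : x ≠ 0) (hy : y ≠ 0)
    (z : Fin k → ℝ) :
    ∃ M : Matrix (Fin k) (Fin k) ℝ,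
      M *ᵥ ((vnorm x)⁻¹ • x) = (vnorm y)⁻¹ • y ∧ M *ᵥ ((vnorm y)⁻¹ • y) = (vnorm x)⁻¹ • x ∧
      |gramForm W x y z - ((Real.pi - ang x y) / (2 * Real.pi) * vnorm z ^ 2 +
          Real.sin (ang x y) / (2 * Real.pi) * (z ⬝ᵥ M *ᵥ z))| ≤ ε * vnorm z ^ 2 := by
  obtain ⟨M, -, hxy, hyx, -, hε⟩ := hW x y hx hy
  refine ⟨M, hxy, hyx, ?_⟩
  have h := abs_dotProduct_mulVec_le_opNorm_mul _ z |>.trans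
    (mul_le_mul_of_nonneg_right hε (sq_nonneg (vnorm z)))
  simpa only [gramForm, sub_mulVec, add_mulVec, smul_mulVec, one_mulVec, dotProduct_sub,
    dotProduct_add, dotProduct_smul, smul_eq_mul, ← vnorm_sq, dotProduct_sum_ite_vecMulVec_mulVec]
    using h

lemma abs_gramForm_self_sub_le (hW : WDC W ε) {x : Fin k → ℝ} (hx : x ≠ 0) (z : Fin k → ℝ) :
    |gramForm W x x z - vnorm z ^ 2 / 2| ≤ ε * vnorm z ^ 2 := by
  obtain ⟨M, -, -, h⟩ := hW.exists_abs_gramForm_sub_le hx hx z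
  rw [ang_self hx, Real.sin_zero] at h
  convert h using 3
  field_simp [Real.pi_ne_zero]
  ring

end WDC

lemma mulVec_eq_of_mulVec_normalize {k : ℕ} {M : Matrix (Fin k) (Fin k) ℝ} {x y : Fin k → ℝ}
    (hx : x ≠ 0) (h : M *ᵥ ((vnorm x)⁻¹ • x) = (vnorm y)⁻¹ • y) :
    M *ᵥ x = (vnorm x / vnorm y) • y := by
  calc M *ᵥ x = vnorm x • M *ᵥ ((vnorm x)⁻¹ • x) := by
        rw [← mulVec_smul, smul_inv_smul₀ (vnorm_pos hx).ne']
    _ = (vnorm x / vnorm y) • y := by rw [h, smul_smul, div_eq_mul_inv]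

lemma neg_dotProduct_mulVec_sub_le {k : ℕ} {M : Matrix (Fin k) (Fin k) ℝ} {x y : Fin k → ℝ}
    (hx : x ≠ 0) (hy : y ≠ 0) (hxy : M *ᵥ ((vnorm x)⁻¹ • x) = (vnorm y)⁻¹ • y)
    (hyx : M *ᵥ ((vnorm y)⁻¹ • y) = (vnorm x)⁻¹ • x) :
    -((x - y) ⬝ᵥ M *ᵥ (x - y)) ≤ vnorm (x - y) ^ 2 := by
  have hcs := neg_le_of_abs_le (abs_dotProduct_le_vnorm_mul_vnorm x y)
  rw [vnorm_sq, mulVec_sub, mulVec_eq_of_mulVec_normalize hx hxy,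
    mulVec_eq_of_mulVec_normalize hy hyx]
  simp only [sub_dotProduct, dotProduct_sub, dotProduct_smul, smul_eq_mul, ← vnorm_sq,
    dotProduct_comm y x]
  have ha := vnorm_pos hx
  have hb := vnorm_pos hy
  set a := vnorm x
  set b := vnorm y
  set c := x ⬝ᵥ y
  have key : a ^ 2 - c - (c - b ^ 2) + (a / b * c - b / a * a ^ 2 - (a / b * b ^ 2 - b / a * c)) =
      (a - b) ^ 2 * (a * b + c) / (a * b) := by
    field_simp
    ring
  have := div_nonneg (mul_nonneg (sq_nonneg (a - b)) (neg_le_iff_add_nonneg'.mp hcs))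
    (mul_pos ha hb).le
  linarith

theorem stmt14 {m k : ℕ} (W : Matrix (Fin m) (Fin k) ℝ) (ε : ℝ) (hW : WDC W ε)
    (x y : Fin k → ℝ) (hx : x ≠ 0) (hy : y ≠ 0) :
    vnorm ((Wplus W x - Wplus W y).mulVec y) ^ 2 ≤
      2 * (2 * ε + ang x y) * vnorm (x - y) ^ 2 := by
  obtain ⟨M, hxy, hyx, hGxy⟩ := hW.exists_abs_gramForm_sub_le hx hy (x - y)
  have hGxx := (abs_le.mp (hW.abs_gramForm_self_sub_le hx (x - y))).2
  have hGyy := (abs_le.mp (hW.abs_gramForm_self_sub_le hy (x - y))).2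
  have hgap := sq_vnorm_Wplus_sub_Wplus_mulVec_le W x y
  set θ := ang x y
  set Z := vnorm (x - y) ^ 2
  have hθ : 0 ≤ θ := Real.arccos_nonneg _
  have hsin : 0 ≤ Real.sin θ := Real.sin_nonneg_of_nonneg_of_le_pi hθ (Real.arccos_le_pi _)
  have hM : Real.sin θ / (2 * Real.pi) * -((x - y) ⬝ᵥ M *ᵥ (x - y)) ≤
      Real.sin θ / (2 * Real.pi) * Z :=
    mul_le_mul_of_nonneg_left (neg_dotProduct_mulVec_sub_le hx hy hxy hyx) (by positivity)
  have hangle : (θ + Real.sin θ) / (2 * Real.pi) * Z ≤ θ * Z := by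
    refine mul_le_mul_of_nonneg_right ?_ (sq_nonneg _)
    rw [div_le_iff₀ (by positivity)]
    nlinarith [Real.sin_le hθ, Real.pi_gt_three]
  have hsplit : (Real.pi - θ) / (2 * Real.pi) * Z = Z / 2 - θ / (2 * Real.pi) * Z := by
    field_simp
  linear_combination hgap + hGxx + hGyy + 2 * (abs_le.mp hGxy).1 + 2 * hM + 2 * hangle - 2 * hsplit

end
end
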